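/- Solving a continuity constraint by first-order expansion: let φ : ℝ × ℝ^p → ℝ be C¹ in both arguments, and suppose φ(τ, θ₁) = φ(τ, θ₂) (continuity at change-point τ), φ(τ*, θ₁*) = φ(τ*, θ₂*), and ∂φ/∂x(τ*, θ₂*) ≠ ∂φ/∂x(τ*, θ₁*). Then, as (θ₁, θ₂, τ) → (θ₁*, θ₂*, τ*), τ − τ* = −[φ(τ*, θ₂) − φ(τ*, θ₁)]/[∂φ/∂x(τ*, θ₂*) − ∂φ/∂x(τ*, θ₁*)] · (1 + o(1)). -/

import Mathlib

open Filter Topology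

/-- First-order expansion of the continuity constraint at a change-point:
if the two segments join continuously at `τ` and at the true values, and the
true `x`-derivatives differ at `τ*`, then as `(τ, θ₁, θ₂) → (τ*, θ₁*, θ₂*)`
along the constraint set,
`τ − τ* = −[φ(τ*, θ₂) − φ(τ*, θ₁)] / [∂ₓφ(τ*, θ₂*) − ∂ₓφ(τ*, θ₁*)] · (1 + o(1))`. -/
theorem stmt13
    (p : ℕ) (φ : ℝ → (Fin p → ℝ) → ℝ)
    (hφ : ContDiff ℝ 1 (fun z : ℝ × (Fin p → ℝ) => φ z.1 z.2))
    (τstar : ℝ) (θ₁star θ₂star : Fin p → ℝ)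
    (hcont_star : φ τstar θ₁star = φ τstar θ₂star)
    (hder : deriv (fun x => φ x θ₂star) τstar ≠ deriv (fun x => φ x θ₁star) τstar) :
    ∃ e : ℝ × (Fin p → ℝ) × (Fin p → ℝ) → ℝ,
      Tendsto e (𝓝[{z : ℝ × (Fin p → ℝ) × (Fin p → ℝ) | φ z.1 z.2.1 = φ z.1 z.2.2}]
          (τstar, θ₁star, θ₂star)) (𝓝 0)
      ∧ ∀ᶠ z in (𝓝[{z : ℝ × (Fin p → ℝ) × (Fin p → ℝ) | φ z.1 z.2.1 = φ z.1 z.2.2}]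
          (τstar, θ₁star, θ₂star)),
          z.1 - τstar
            = -((φ τstar z.2.2 - φ τstar z.2.1)
                / (deriv (fun x => φ x θ₂star) τstar - deriv (fun x => φ x θ₁star) τstar))
              * (1 + e z) := by
  classical
  set Φ : ℝ × (Fin p → ℝ) → ℝ := fun z => φ z.1 z.2 with hΦdef
  set d : ℝ → (Fin p → ℝ) → ℝ :=
    fun x θ => fderiv ℝ Φ (x, θ) ((1:ℝ), (0 : Fin p → ℝ)) with hddef
  have hHD : ∀ (θ : Fin p → ℝ) (x : ℝ), HasDerivAt (fun t => φ t θ) (d x θ) x := by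
    intro θ x
    have hdiff := (hφ.differentiable one_ne_zero) (x, θ)
    have hcurve : HasDerivAt (fun t : ℝ => (t, θ)) ((1 : ℝ), (0 : Fin p → ℝ)) x :=
      HasDerivAt.prodMk (hasDerivAt_id x) (hasDerivAt_const x θ)
    exact hdiff.hasFDerivAt.comp_hasDerivAt x hcurve
  set D : ℝ := deriv (fun x => φ x θ₂star) τstar - deriv (fun x => φ x θ₁star) τstar
    with hDdef
  have hD0 : D ≠ 0 := sub_ne_zero.mpr hder
  have hDpos : 0 < |D| := abs_pos.mpr hD0
  have hDd : D = d τstar θ₂star - d τstar θ₁star := by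
    rw [hDdef, (hHD θ₂star τstar).deriv, (hHD θ₁star τstar).deriv]
  have hGcont : ContinuousAt (fun w : ℝ × (Fin p → ℝ) × (Fin p → ℝ) =>
      d w.1 w.2.2 - d w.1 w.2.1) (τstar, θ₁star, θ₂star) := by
    have hc := hφ.continuous_fderiv one_ne_zero
    apply Continuous.continuousAt
    fun_prop
  -- Main estimate: on the constraint set near the limit, the mean value theorem
  -- gives a `c` close to `D` with `φ τ* θ₂ - φ τ* θ₁ = -c (τ - τ*)`.
  have main : ∀ r : ℝ, 0 < r → ∀ᶠ z : ℝ × (Fin p → ℝ) × (Fin p → ℝ) in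
      (𝓝[{z : ℝ × (Fin p → ℝ) × (Fin p → ℝ) | φ z.1 z.2.1 = φ z.1 z.2.2}]
          (τstar, θ₁star, θ₂star)),
      ∃ c : ℝ, |c - D| ≤ r ∧
        φ τstar z.2.2 - φ τstar z.2.1 = -c * (z.1 - τstar) := by
    intro r hr
    obtain ⟨δ, hδ0, hδ⟩ := Metric.continuousAt_iff.mp hGcont r hr
    filter_upwards [eventually_mem_nhdsWithin,
      mem_nhdsWithin_of_mem_nhds (Metric.ball_mem_nhds _ hδ0)] with z hz hball
    have hzc : φ z.1 z.2.2 - φ z.1 z.2.1 = 0 := by rw [hz]; ring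
    have hdistz : dist z (τstar, θ₁star, θ₂star) < δ := Metric.mem_ball.mp hball
    rcases lt_trichotomy z.1 τstar with hlt | heq | hgt
    · obtain ⟨ξ, hξmem, hξ⟩ := exists_hasDerivAt_eq_slope
        (fun t => φ t z.2.2 - φ t z.2.1) (fun x => d x z.2.2 - d x z.2.1) hlt
        (fun t _ => (((hHD z.2.2 t).sub (hHD z.2.1 t)).continuousAt).continuousWithinAt)
        (fun x _ => (hHD z.2.2 x).sub (hHD z.2.1 x))
      refine ⟨d ξ z.2.2 - d ξ z.2.1, ?_, ?_⟩
      · have h1 : dist ξ τstar < δ := by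
          have hz1 : dist z.1 τstar < δ := lt_of_le_of_lt (by rw [Prod.dist_eq]; exact le_max_left _ _) hdistz
          rw [Real.dist_eq] at hz1 ⊢
          rw [abs_sub_lt_iff] at hz1 ⊢
          constructor <;> nlinarith [hξmem.1, hξmem.2]
        have hw : dist ((ξ, z.2) : ℝ × (Fin p → ℝ) × (Fin p → ℝ))
            (τstar, θ₁star, θ₂star) < δ := by
          rw [Prod.dist_eq]
          exact max_lt h1 (lt_of_le_of_lt (le_max_right (dist z.1 τstar) _) (by rw [Prod.dist_eq] at hdistz; exact hdistz))
        have h2 := hδ hw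
        rw [Real.dist_eq, ← hDd] at h2
        exact h2.le
      · have hslope : d ξ z.2.2 - d ξ z.2.1 =
            ((φ τstar z.2.2 - φ τstar z.2.1) - (φ z.1 z.2.2 - φ z.1 z.2.1))
              / (τstar - z.1) := hξ
        have hne : τstar - z.1 ≠ 0 := sub_ne_zero.mpr hlt.ne'
        rw [hzc, sub_zero] at hslope
        have hX : (φ τstar z.2.2 - φ τstar z.2.1)
            = (d ξ z.2.2 - d ξ z.2.1) * (τstar - z.1) := by
          rw [hslope]; field_simp
        rw [hX]; ring
    · refine ⟨D, by simp [hr.le], ?_⟩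
      rw [← heq]; simp [hzc]
    · obtain ⟨ξ, hξmem, hξ⟩ := exists_hasDerivAt_eq_slope
        (fun t => φ t z.2.2 - φ t z.2.1) (fun x => d x z.2.2 - d x z.2.1) hgt
        (fun t _ => (((hHD z.2.2 t).sub (hHD z.2.1 t)).continuousAt).continuousWithinAt)
        (fun x _ => (hHD z.2.2 x).sub (hHD z.2.1 x))
      refine ⟨d ξ z.2.2 - d ξ z.2.1, ?_, ?_⟩
      · have h1 : dist ξ τstar < δ := by
          have hz1 : dist z.1 τstar < δ := lt_of_le_of_lt (by rw [Prod.dist_eq]; exact le_max_left _ _) hdistz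
          rw [Real.dist_eq] at hz1 ⊢
          rw [abs_sub_lt_iff] at hz1 ⊢
          constructor <;> nlinarith [hξmem.1, hξmem.2]
        have hw : dist ((ξ, z.2) : ℝ × (Fin p → ℝ) × (Fin p → ℝ))
            (τstar, θ₁star, θ₂star) < δ := by
          rw [Prod.dist_eq]
          exact max_lt h1 (lt_of_le_of_lt (le_max_right (dist z.1 τstar) _) (by rw [Prod.dist_eq] at hdistz; exact hdistz))
        have h2 := hδ hw
        rw [Real.dist_eq, ← hDd] at h2
        exact h2.le
      · have hslope : d ξ z.2.2 - d ξ z.2.1 =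
            ((φ z.1 z.2.2 - φ z.1 z.2.1) - (φ τstar z.2.2 - φ τstar z.2.1))
              / (z.1 - τstar) := hξ
        have hne : z.1 - τstar ≠ 0 := sub_ne_zero.mpr hgt.ne'
        rw [hzc, zero_sub] at hslope
        have hX : -(φ τstar z.2.2 - φ τstar z.2.1)
            = (d ξ z.2.2 - d ξ z.2.1) * (z.1 - τstar) := by
          rw [hslope]; field_simp
        nlinarith [hX]
  refine ⟨fun z => if φ τstar z.2.2 - φ τstar z.2.1 = 0 then 0
      else -(z.1 - τstar) * D / (φ τstar z.2.2 - φ τstar z.2.1) - 1, ?_, ?_⟩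
  · rw [Metric.tendsto_nhds]
    intro ε hε
    have hr : 0 < min (|D| / 2) (ε * |D| / 4) :=
      lt_min (by positivity) (by positivity)
    filter_upwards [main _ hr] with z hzm
    obtain ⟨c, hcr, hceq⟩ := hzm
    have hc1 : |c - D| ≤ |D| / 2 := hcr.trans (min_le_left _ _)
    have hc2 : |c - D| ≤ ε * |D| / 4 := hcr.trans (min_le_right _ _)
    have hcabs : |D| / 2 ≤ |c| := by
      have h : |D| - |c| ≤ |c - D| :=
        le_trans (abs_sub_abs_le_abs_sub D c) (le_of_eq (abs_sub_comm D c))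
      linarith
    have hcpos : 0 < |c| := lt_of_lt_of_le (by positivity) hcabs
    have hcne : c ≠ 0 := abs_pos.mp hcpos
    by_cases hg : φ τstar z.2.2 - φ τstar z.2.1 = 0
    · simpa [hg] using hε
    · have hz1 : z.1 - τstar ≠ 0 := by
        intro h; exact hg (by rw [hceq, h, mul_zero])
      have hval : (-(z.1 - τstar) * D / (φ τstar z.2.2 - φ τstar z.2.1) - 1)
          = (D - c) / c := by
        rw [hceq]
        field_simp
      rw [Real.dist_eq]
      simp only [if_neg hg, hval, sub_zero]
      have habs : |(D - c) / c| ≤ (ε * |D| / 4) / (|D| / 2) := by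
        rw [abs_div, abs_sub_comm]
        exact div_le_div₀ (by positivity) hc2 (by positivity) hcabs
      have heq2 : (ε * |D| / 4) / (|D| / 2) = ε / 2 := by
        field_simp
        ring
      rw [heq2] at habs
      linarith
  · filter_upwards [main (|D| / 2) (by positivity)] with z hzm
    obtain ⟨c, hcr, hceq⟩ := hzm
    have hcabs : |D| / 2 ≤ |c| := by
      have h : |D| - |c| ≤ |c - D| :=
        le_trans (abs_sub_abs_le_abs_sub D c) (le_of_eq (abs_sub_comm D c))
      linarith
    have hcne : c ≠ 0 := abs_pos.mp (lt_of_lt_of_le (by positivity) hcabs)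
    by_cases hg : φ τstar z.2.2 - φ τstar z.2.1 = 0
    · have hz1 : z.1 - τstar = 0 := by
        have := hceq
        rw [hg] at this
        rcases mul_eq_zero.mp this.symm with h | h
        · exact absurd (neg_eq_zero.mp h) hcne
        · exact h
      rw [hz1, hg]
      simp
    · simp only [if_neg hg]
      field_simp
      ring
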